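/- Let g_{ii}, p_i ∈ ℝ^K with g_{ii} ≥ 0 componentwise, g_{ii} ≠ 0, and fix constants c > 0 (the interference-plus-noise from other groups) and d_k > 0 (per-device coefficients ∑_{j≠i} g_{jk}/(g_{jj}^T p_j)). Consider minimizing f(p) = c/(g^T p) + ∑_k d_k p_k over p with 0 < p_k ≤ P_k (power budgets), where g = g_{ii} has all entries positive. Let p̄ be the full-budget vector (p̄_k = P_k for all k) and a_min = min_k √(c g_k / d_k). If g^T p̄ ≤ a_min, then p = p̄ is optimal. -/
import Mathlib


theorem stmt_5 {K : Type*} [Fintype K] [Nonempty K]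
    (g d P : K → ℝ) (c : ℝ) (hc : 0 < c)
    (hg : ∀ k, 0 < g k) (hd : ∀ k, 0 < d k) (hP : ∀ k, 0 < P k)
    (hcond : ∑ k, g k * P k ≤ ⨅ k, Real.sqrt (c * g k / d k)) :
    ∀ p : K → ℝ, (∀ k, 0 < p k) → (∀ k, p k ≤ P k) →
      c / (∑ k, g k * P k) + ∑ k, d k * P k ≤ c / (∑ k, g k * p k) + ∑ k, d k * p k := by
  intro p hp hpP
  set S := ∑ k, g k * P k with hS
  set s := ∑ k, g k * p k with hs
  have hspos : 0 < s :=
    Finset.sum_pos (fun k _ => mul_pos (hg k) (hp k)) Finset.univ_nonempty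
  have hsS : s ≤ S :=
    Finset.sum_le_sum (fun k _ => mul_le_mul_of_nonneg_left (hpP k) (hg k).le)
  have hSpos : 0 < S := lt_of_lt_of_le hspos hsS
  have hsSpos : 0 < s * S := mul_pos hspos hSpos
  have key : ∀ k, d k ≤ c * g k / (s * S) := by
    intro k
    have h1 : S ≤ Real.sqrt (c * g k / d k) :=
      hcond.trans (ciInf_le (Set.Finite.bddBelow (Set.finite_range _)) k)
    have hnn : 0 ≤ c * g k / d k :=
      div_nonneg (mul_nonneg hc.le (hg k).le) (hd k).le
    have h2 : s * S ≤ c * g k / d k := by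
      calc s * S ≤ S * S := mul_le_mul_of_nonneg_right hsS hSpos.le
        _ ≤ Real.sqrt (c * g k / d k) * Real.sqrt (c * g k / d k) :=
            mul_le_mul h1 h1 hSpos.le (Real.sqrt_nonneg _)
        _ = c * g k / d k := Real.mul_self_sqrt hnn
    rw [le_div_iff₀ hsSpos]
    calc d k * (s * S) ≤ d k * (c * g k / d k) :=
          mul_le_mul_of_nonneg_left h2 (hd k).le
      _ = c * g k := by rw [mul_comm (d k), div_mul_cancel₀ _ (hd k).ne']
  have hsum : ∑ k, d k * P k - ∑ k, d k * p k ≤ c / s - c / S := by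
    have hstep : ∑ k, d k * P k - ∑ k, d k * p k
        ≤ ∑ k, c * g k / (s * S) * (P k - p k) := by
      rw [← Finset.sum_sub_distrib]
      apply Finset.sum_le_sum
      intro k _
      have : d k * P k - d k * p k = d k * (P k - p k) := by ring
      rw [this]
      exact mul_le_mul_of_nonneg_right (key k) (sub_nonneg.2 (hpP k))
    have hexp : ∑ k, c * g k * (P k - p k) = c * S - c * s := by
      rw [hS, hs, Finset.mul_sum, Finset.mul_sum, ← Finset.sum_sub_distrib]
      exact Finset.sum_congr rfl (fun k _ => by ring)
    have heq : ∑ k, c * g k / (s * S) * (P k - p k) = c / s - c / S := by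
      calc ∑ k, c * g k / (s * S) * (P k - p k)
          = (∑ k, c * g k * (P k - p k)) / (s * S) := by
            rw [Finset.sum_div]
            exact Finset.sum_congr rfl (fun k _ => by ring)
        _ = (c * S - c * s) / (s * S) := by rw [hexp]
        _ = c / s - c / S := by
            rw [div_sub_div _ _ hspos.ne' hSpos.ne']
            ring_nf
    linarith
  linarith
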